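/- Let G be a finite simple graph on vertex set {1,…,n} (no self-loops) in which every vertex has at least one neighbor, with graph Laplacian L. If matrices P, Q ∈ ℝ^{n×d} satisfy L = P Qᵀ, then the column-concatenated matrix [P Q] ∈ ℝ^{n×2d} is both node-identifying and adjacency-identifying. -/

import Mathlib

open Matrix

/-!
With `W^Q = [[1, 0], [0, 0]]` and `W^K = [[0, 0], [s, 0]]` one gets
`([P Q] W^Q)([P Q] W^K)ᵀ = [P 0][s Q 0]ᵀ = s • P Qᵀ = s • L`, so the attention rows are rows of
`L` scaled by `s / √d_k`. For `s = 1` a row of `L` is maximal exactly on the diagonal, where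
`L i i = deg i > 0 ≥ L i l`; for `s = -1` the order reverses, and a row of `L` is minimal exactly
at the neighbours of `i`, where `L i l = -1`, since every other entry is nonnegative.
-/

/-- The unnormalized attention matrix `(1/√d_k)·(P W^Q)(P W^K)ᵀ`. -/
noncomputable def attn {n : ℕ} {m : Type*} [Fintype m] (dk : ℝ)
    (P : Matrix (Fin n) m ℝ) (WQ WK : Matrix m m ℝ) : Matrix (Fin n) (Fin n) ℝ :=
  (1 / Real.sqrt dk) • ((P * WQ) * (P * WK)ᵀ)

/-- `P` is node-identifying: for some `W^Q, W^K`, the `(i,j)` entry of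
`(1/√d_k)·(P W^Q)(P W^K)ᵀ` is a maximum of its row exactly when `i = j`. -/
def IsNodeIdentifying {n : ℕ} {m : Type*} [Fintype m] (dk : ℝ)
    (P : Matrix (Fin n) m ℝ) : Prop :=
  ∃ WQ WK : Matrix m m ℝ, ∀ i j,
    (∀ l, attn dk P WQ WK i l ≤ attn dk P WQ WK i j) ↔ i = j

/-- `P` is adjacency-identifying: for some `W^Q, W^K`, the `(i,j)` entry of
`(1/√d_k)·(P W^Q)(P W^K)ᵀ` is a maximum of its row exactly when `i` and `j` are adjacent. -/
def IsAdjIdentifying {n : ℕ} {m : Type*} [Fintype m] (dk : ℝ) (G : SimpleGraph (Fin n))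
    (P : Matrix (Fin n) m ℝ) : Prop :=
  ∃ WQ WK : Matrix m m ℝ, ∀ i j,
    (∀ l, attn dk P WQ WK i l ≤ attn dk P WQ WK i j) ↔ G.Adj i j

namespace SimpleGraph

variable {V R : Type*} [Fintype V] [DecidableEq V] (G : SimpleGraph V) [DecidableRel G.Adj]

lemma lapMatrix_apply_self [AddGroupWithOne R] (i : V) : G.lapMatrix R i i = G.degree i := by
  simp [lapMatrix, degMatrix]

lemma lapMatrix_apply_of_adj [AddGroupWithOne R] {i j : V} (hij : G.Adj i j) :
    G.lapMatrix R i j = -1 := by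
  simp [lapMatrix, degMatrix, hij.ne, hij]

lemma lapMatrix_apply_of_ne_of_not_adj [AddGroupWithOne R] {i j : V} (hne : i ≠ j)
    (hij : ¬G.Adj i j) : G.lapMatrix R i j = 0 := by
  simp [lapMatrix, degMatrix, hne, hij]

variable [Ring R] [LinearOrder R] [IsStrictOrderedRing R]

lemma lapMatrix_apply_nonpos_of_ne {i j : V} (hij : i ≠ j) : G.lapMatrix R i j ≤ 0 := by
  by_cases hadj : G.Adj i j
  · simp [G.lapMatrix_apply_of_adj hadj]
  · rw [G.lapMatrix_apply_of_ne_of_not_adj hij hadj]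

lemma lapMatrix_apply_nonneg_of_not_adj {i j : V} (hij : ¬G.Adj i j) : 0 ≤ G.lapMatrix R i j := by
  rcases eq_or_ne i j with rfl | hne
  · rw [lapMatrix_apply_self]; exact Nat.cast_nonneg _
  · rw [G.lapMatrix_apply_of_ne_of_not_adj hne hij]

lemma neg_one_le_lapMatrix_apply (i j : V) : -1 ≤ G.lapMatrix R i j := by
  by_cases hadj : G.Adj i j
  · rw [G.lapMatrix_apply_of_adj hadj]
  · exact (neg_nonpos.2 zero_le_one).trans (G.lapMatrix_apply_nonneg_of_not_adj hadj)

lemma forall_lapMatrix_apply_le_iff {i : V} (hi : 0 < G.degree i) (j : V) :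
    (∀ l, G.lapMatrix R i l ≤ G.lapMatrix R i j) ↔ i = j := by
  refine ⟨fun h => by_contra fun hij => ?_, ?_⟩
  · have hdiag : (0 : R) < G.lapMatrix R i i := by
      rw [lapMatrix_apply_self]; exact_mod_cast hi
    exact ((h i).trans (G.lapMatrix_apply_nonpos_of_ne hij)).not_gt hdiag
  · rintro rfl l
    rcases eq_or_ne i l with rfl | hil
    · rfl
    · rw [lapMatrix_apply_self]
      exact (G.lapMatrix_apply_nonpos_of_ne hil).trans (Nat.cast_nonneg _)

lemma forall_lapMatrix_apply_ge_iff {i : V} (hi : 0 < G.degree i) (j : V) :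
    (∀ l, G.lapMatrix R i j ≤ G.lapMatrix R i l) ↔ G.Adj i j := by
  refine ⟨fun h => by_contra fun hij => ?_, fun hij l => ?_⟩
  · obtain ⟨k, hik⟩ := (G.degree_pos_iff_exists_adj i).mp hi
    have hjk := h k
    rw [G.lapMatrix_apply_of_adj hik] at hjk
    exact (hjk.trans_lt (neg_neg_of_pos zero_lt_one)).not_ge
      (G.lapMatrix_apply_nonneg_of_not_adj hij)
  · rw [G.lapMatrix_apply_of_adj hij]
    exact G.neg_one_le_lapMatrix_apply i l

end SimpleGraph

section RowOrder

variable {ι κ R : Type*} [Ring R] [LinearOrder R] [IsStrictOrderedRing R] {c : R}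
  (M : Matrix ι κ R) (i : ι) (j : κ)

lemma forall_smul_apply_le_iff_of_pos (hc : 0 < c) :
    (∀ l, (c • M) i l ≤ (c • M) i j) ↔ ∀ l, M i l ≤ M i j := by
  simp only [Matrix.smul_apply, smul_eq_mul, mul_le_mul_iff_right₀ hc]

lemma forall_smul_apply_le_iff_of_neg (hc : c < 0) :
    (∀ l, (c • M) i l ≤ (c • M) i j) ↔ ∀ l, M i j ≤ M i l := by
  simp only [Matrix.smul_apply, smul_eq_mul, mul_le_mul_left_of_neg hc]

end RowOrder

lemma attn_fromCols_fromBlocks {n : ℕ} {m : Type*} [Fintype m] [DecidableEq m] (dk s : ℝ)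
    (P Q : Matrix (Fin n) m ℝ) :
    attn dk (fromCols P Q) (fromBlocks 1 0 0 0) (fromBlocks 0 0 (s • 1) 0) =
      (s / Real.sqrt dk) • (P * Qᵀ) := by
  rw [attn, fromCols_mul_fromBlocks, fromCols_mul_fromBlocks, transpose_fromCols,
    fromCols_mul_fromRows]
  simp [smul_smul, div_eq_inv_mul]

/-- if the graph Laplacian factors as `L = P Qᵀ`, then the column-wise
concatenation `[P Q]` is both node-identifying and adjacency-identifying. -/
theorem stmt7 {n d : ℕ} (G : SimpleGraph (Fin n)) [DecidableRel G.Adj]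
    (hdeg : ∀ v, 0 < G.degree v) (dk : ℝ) (hdk : 0 < dk)
    (P Q : Matrix (Fin n) (Fin d) ℝ)
    (hfac : G.lapMatrix ℝ = P * Qᵀ) :
    IsNodeIdentifying dk (Matrix.fromCols P Q) ∧
      IsAdjIdentifying dk G (Matrix.fromCols P Q) := by
  have hsqrt : 0 < Real.sqrt dk := Real.sqrt_pos.2 hdk
  constructor
  · refine ⟨fromBlocks 1 0 0 0, fromBlocks 0 0 ((1 : ℝ) • 1) 0, fun i j => ?_⟩
    rw [attn_fromCols_fromBlocks, ← hfac,
      forall_smul_apply_le_iff_of_pos (hc := div_pos one_pos hsqrt)]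
    exact G.forall_lapMatrix_apply_le_iff (hdeg i) j
  · refine ⟨fromBlocks 1 0 0 0, fromBlocks 0 0 ((-1 : ℝ) • 1) 0, fun i j => ?_⟩
    rw [attn_fromCols_fromBlocks, ← hfac,
      forall_smul_apply_le_iff_of_neg (hc := div_neg_of_neg_of_pos neg_one_lt_zero hsqrt)]
    exact G.forall_lapMatrix_apply_ge_iff (hdeg i) j
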